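/- arXiv:0904.0338 — 3 statements merged into one kernel-verified Lean document; each statement's English description precedes it below -/
import Mathlib

section
/- For every s ∈ Ω, the set {P ∈ Δ(Ω) : s ∈ Â_P} is a Borel subset of Δ(Ω) with its weak* topology, where Â_P is the acceptance set of the global category test. -/
open MeasureTheory Set
open scoped ENNReal

/-- The space of paths `Ω = {0,1}^ℕ`. -/
abbrev Omega : Type := ℕ → Bool

/-- The cylinder of all extensions of the first `t` coordinates of `s`. -/
def cyl (s : Omega) (t : ℕ) : Set Omega := {x | ∀ i < t, x i = s i}

/-- `t` is the least natural number with `P (C(sᵢ|t) \ {sᵢ}) ≤ b`. -/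
def IsLeastCut (P : Measure Omega) (si : Omega) (b : ℝ≥0∞) (t : ℕ) : Prop :=
  P (cyl si t \ {si}) ≤ b ∧ ∀ u < t, ¬ P (cyl si u \ {si}) ≤ b

/-- The acceptance set `Â_P = ⋃ k (Ω \ ⋃ i C(sⁱ|t(i,k))) ∪ S` of the global category test. -/
def Ahat (S : ℕ → Omega) (t : ℕ → ℕ → ℕ) : Set Omega :=
  (⋃ k, (⋃ i, cyl (S i) (t i k))ᶜ) ∪ Set.range S

/-!
Each cut index `t(i,k,P)` is the least `m` with `P (C(sⁱ|m) \ {sⁱ}) ≤ 2^{-(k+i)}`. The set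
`C(sⁱ|m) \ {sⁱ}` is open, so by the portmanteau theorem `P ↦ P (C(sⁱ|m) \ {sⁱ})` is lower
semicontinuous and each of these conditions cuts out a closed set of measures; hence every
`t(i,k,·)` is Borel. Membership of `s` in `Â_P` is a countable union of countable intersections
of conditions on these indices, or a condition not involving `P` at all.
-/

theorem Nat.measurable_of_isLeast {α : Type*} [MeasurableSpace α] {p : α → ℕ → Prop}
    {f : α → ℕ} (hf : ∀ x, p x (f x) ∧ ∀ u < f x, ¬ p x u)
    (hp : ∀ k, MeasurableSet {x | p x k}) : Measurable f := by
  classical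
  have hex : ∀ x, ∃ k, p x k := fun x => ⟨f x, (hf x).1⟩
  have hfind : f = fun x => Nat.find (hex x) :=
    funext fun x => ((Nat.find_eq_iff (hex x)).2 (hf x)).symm
  rw [hfind]
  exact measurable_find hex hp

theorem ProbabilityMeasure.lowerSemicontinuous_measure_of_isOpen {Ω : Type*}
    [MeasurableSpace Ω] [TopologicalSpace Ω] [OpensMeasurableSpace Ω] [HasOuterApproxClosed Ω]
    {G : Set Ω} (hG : IsOpen G) :
    LowerSemicontinuous fun μ : ProbabilityMeasure Ω => (μ : Measure Ω) G :=
  lowerSemicontinuous_iff_le_liminf.2 fun _ =>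
    ProbabilityMeasure.le_liminf_measure_open_of_tendsto Filter.tendsto_id hG

theorem isOpen_cyl_diff_singleton (s : Omega) (t : ℕ) : IsOpen (cyl s t \ {s}) :=
  (PiNat.isOpen_cylinder (E := fun _ => Bool) s t).sdiff isClosed_singleton

theorem isClosed_setOf_measure_cyl_diff_singleton_le (s : Omega) (t : ℕ) (b : ℝ≥0∞) :
    IsClosed {P : ProbabilityMeasure Omega | (P : Measure Omega) (cyl s t \ {s}) ≤ b} :=
  (ProbabilityMeasure.lowerSemicontinuous_measure_of_isOpen
    (isOpen_cyl_diff_singleton s t)).isClosed_preimage b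

theorem measurable_of_isLeastCut [MeasurableSpace (ProbabilityMeasure Omega)]
    [BorelSpace (ProbabilityMeasure Omega)] {s : Omega} {b : ℝ≥0∞}
    {τ : ProbabilityMeasure Omega → ℕ} (hτ : ∀ P, IsLeastCut P.toMeasure s b (τ P)) :
    Measurable τ :=
  Nat.measurable_of_isLeast
    (p := fun (P : ProbabilityMeasure Omega) t => (P : Measure Omega) (cyl s t \ {s}) ≤ b) hτ
    fun t => (isClosed_setOf_measure_cyl_diff_singleton_le s t b).measurableSet

theorem stmt5_general (S : ℕ → Omega)
    (t : ProbabilityMeasure Omega → ℕ → ℕ → ℕ)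
    (ht : ∀ (P : ProbabilityMeasure Omega) (i k : ℕ),
      IsLeastCut P.toMeasure (S i) ((2 : ℝ≥0∞)⁻¹ ^ (k + i)) (t P i k))
    (s : Omega) :
    @MeasurableSet (ProbabilityMeasure Omega) (borel (ProbabilityMeasure Omega))
      {P : ProbabilityMeasure Omega | s ∈ Ahat S (t P)} := by
  let : MeasurableSpace (ProbabilityMeasure Omega) := borel _
  have : BorelSpace (ProbabilityMeasure Omega) := ⟨rfl⟩
  have ht_meas (i k : ℕ) : Measurable fun P => t P i k :=
    measurable_of_isLeastCut fun P => ht P i k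
  simp only [Ahat, mem_union, ofPred_or, mem_iUnion, mem_compl_iff, not_exists, ofPred_exists,
    ofPred_forall]
  refine .union (.iUnion fun k => .iInter fun i => ?_) (.const _)
  exact ht_meas i k (Set.to_countable {m | s ∉ cyl (S i) m}).measurableSet

/-- For every path `s`, the set `{P ∈ Δ(Ω) : s ∈ Â_P}` is a Borel subset of `Δ(Ω)` with its
weak* topology. -/
theorem stmt5 (S : ℕ → Omega) (hS : DenseRange S)
    (t : ProbabilityMeasure Omega → ℕ → ℕ → ℕ)
    (ht : ∀ (P : ProbabilityMeasure Omega) (i k : ℕ),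
      IsLeastCut P.toMeasure (S i) ((2 : ℝ≥0∞)⁻¹ ^ (k + i)) (t P i k))
    (s : Omega) :
    @MeasurableSet (ProbabilityMeasure Omega) (borel (ProbabilityMeasure Omega))
      {P : ProbabilityMeasure Omega | s ∈ Ahat S (t P)} :=
  stmt5_general S t ht s
end

section
/- Let S = {s^1, s^2, ...} be a countable dense subset of Ω and Q^S the measure with Q^S({s^i}) = 1/(i(i+1)). If P is a probability measure with P(S) = 0, then for every path s rejected by the global category test T̂_S the ratio Q^S(C(s|t))/P(C(s|t)) is unbounded in t; hence the likelihood test with fixed alternative Q^S rejects P on s. -/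
/-!
If `s ∈ C(sⁱ|t(i,k))` then this cylinder is also `C(s|t(i,k))`. Since `P(S) = 0`, removing the
atom `sⁱ` does not change its `P`-measure, so `P(C(s|t(i,k))) ≤ 2^{-(k+i)}`, while it contains
the atom `sⁱ` of `Q`-mass `1/((i+1)(i+2))`. As `(i+1)(i+2) ≤ 4 · 2^i`, the likelihood ratio at
time `t(i,k)` is at least `2^k / 4`, and `k` is arbitrary.
-/

open MeasureTheory Set
open scoped ENNReal

lemma mem_cyl_self (x : Omega) (t : ℕ) : x ∈ cyl x t := fun _ _ => rfl

lemma cyl_eq_of_mem {s x : Omega} {t : ℕ} (h : s ∈ cyl x t) : cyl s t = cyl x t := by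
  ext y
  exact ⟨fun hy j hj => (hy j hj).trans (h j hj), fun hy j hj => (hy j hj).trans (h j hj).symm⟩

lemma succ_mul_add_two_le_four_mul_two_pow (i : ℕ) : (i + 1) * (i + 2) ≤ 4 * 2 ^ i := by
  induction i with
  | zero => norm_num
  | succ i ih =>
    have := Nat.lt_two_pow_self (n := i)
    rw [pow_succ]
    nlinarith

lemma ENNReal.two_pow_div_four_le (i k : ℕ) :
    (2 : ℝ≥0∞) ^ k / 4 ≤ (((i : ℝ≥0∞) + 1) * ((i : ℝ≥0∞) + 2))⁻¹ / 2⁻¹ ^ (k + i) := by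
  have hpoly : ((i : ℝ≥0∞) + 1) * ((i : ℝ≥0∞) + 2) ≤ 4 * 2 ^ i := by
    exact_mod_cast succ_mul_add_two_le_four_mul_two_pow i
  calc (2 : ℝ≥0∞) ^ k / 4 = 2 ^ k * 2 ^ i / (4 * 2 ^ i) :=
        (ENNReal.mul_div_mul_right _ _ (by positivity) (by simp)).symm
    _ ≤ 2 ^ (k + i) / (((i : ℝ≥0∞) + 1) * ((i : ℝ≥0∞) + 2)) := by
        rw [pow_add]; exact ENNReal.div_le_div le_rfl hpoly
    _ = (((i : ℝ≥0∞) + 1) * ((i : ℝ≥0∞) + 2))⁻¹ / 2⁻¹ ^ (k + i) := by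
        rw [← ENNReal.inv_pow, div_eq_mul_inv, div_eq_mul_inv, inv_inv, mul_comm]

lemma ENNReal.eq_top_of_forall_two_pow_div_four_le {a : ℝ≥0∞}
    (h : ∀ k : ℕ, (2 : ℝ≥0∞) ^ k / 4 ≤ a) : a = ⊤ := by
  refine ENNReal.eq_top_of_forall_nnreal_le fun r => ?_
  obtain ⟨k, hk⟩ := pow_unbounded_of_one_lt (r * 4) (by norm_num : (1 : NNReal) < 2)
  refine le_trans ?_ (h k)
  rw [ENNReal.le_div_iff_mul_le (by norm_num) (by norm_num)]
  exact_mod_cast hk.le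

theorem stmt12_general (S : ℕ → Omega)
    (Q : Measure Omega)
    (hQ : ∀ i : ℕ, Q {S i} = (((i : ℝ≥0∞) + 1) * ((i : ℝ≥0∞) + 2))⁻¹)
    (P : Measure Omega) (hP : P (Set.range S) = 0)
    (t : ℕ → ℕ → ℕ)
    (ht : ∀ i k, IsLeastCut P (S i) ((2 : ℝ≥0∞)⁻¹ ^ (k + i)) (t i k))
    (s : Omega) (hrej : s ∉ Set.range S ∧ ∀ k, ∃ i, s ∈ cyl (S i) (t i k)) :
    (⨆ n, Q (cyl s n) / P (cyl s n)) = ⊤ := by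
  refine ENNReal.eq_top_of_forall_two_pow_div_four_le fun k => ?_
  obtain ⟨i, hi⟩ := hrej.2 k
  have hP_atom : P {S i} = 0 := measure_mono_null (singleton_subset_iff.2 (mem_range_self i)) hP
  have hP_le : P (cyl s (t i k)) ≤ 2⁻¹ ^ (k + i) := by
    rw [cyl_eq_of_mem hi, ← measure_sdiff_null hP_atom]
    exact (ht i k).1
  have hQ_ge : (((i : ℝ≥0∞) + 1) * ((i : ℝ≥0∞) + 2))⁻¹ ≤ Q (cyl s (t i k)) := by
    rw [cyl_eq_of_mem hi, ← hQ i]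
    exact measure_mono (singleton_subset_iff.2 (mem_cyl_self _ _))
  calc (2 : ℝ≥0∞) ^ k / 4 ≤ (((i : ℝ≥0∞) + 1) * ((i : ℝ≥0∞) + 2))⁻¹ / 2⁻¹ ^ (k + i) :=
        ENNReal.two_pow_div_four_le i k
    _ ≤ Q (cyl s (t i k)) / P (cyl s (t i k)) := ENNReal.div_le_div hQ_ge hP_le
    _ ≤ ⨆ n, Q (cyl s n) / P (cyl s n) := le_iSup (fun n => Q (cyl s n) / P (cyl s n)) (t i k)

/-- If `Q^S({sⁱ}) = 1/(i(i+1))` (indices shifted to start at `i = 0`) and `P(S) = 0`, then on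
every path `s` rejected by the global category test the likelihood ratios
`Q^S(C(s|n))/P(C(s|n))` are unbounded; hence the likelihood test with fixed alternative `Q^S`
rejects `P` on `s`. -/
theorem stmt12 (S : ℕ → Omega) (hS : DenseRange S) (hinj : Function.Injective S)
    (Q : Measure Omega) [IsProbabilityMeasure Q]
    (hQ : ∀ i : ℕ, Q {S i} = (((i : ℝ≥0∞) + 1) * ((i : ℝ≥0∞) + 2))⁻¹)
    (P : Measure Omega) [IsProbabilityMeasure P] (hP : P (Set.range S) = 0)
    (t : ℕ → ℕ → ℕ)
    (ht : ∀ i k, IsLeastCut P (S i) ((2 : ℝ≥0∞)⁻¹ ^ (k + i)) (t i k))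
    (s : Omega) (hrej : s ∉ Set.range S ∧ ∀ k, ∃ i, s ∈ cyl (S i) (t i k)) :
    (⨆ n, Q (cyl s n) / P (cyl s n)) = ⊤ :=
  stmt12_general S Q hQ P hP t ht s hrej
end

section
/- Fan's minimax theorem: Let X be a compact Hausdorff convex subset of a topological vector space and Y a convex subset of a vector space. Let f : X × Y → ℝ be such that f(·, y) is lower semi-continuous and convex for each y ∈ Y, and f(x, ·) is concave for each x ∈ X. Then min_{x∈X} sup_{y∈Y} f(x,y) = sup_{y∈Y} min_{x∈X} f(x,y). -/
/-!
If a real `c` lay strictly between `sup_y min_x f` and `min_x sup_y f`, the relatively open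
sets `{x ∈ X | c < f x y}` would cover the compact set `X`, so finitely many `y ∈ Y` would
already do. For finitely many `y` one finds a single `y ∈ Y` with `c ≤ f x y` on all of `X`,
by induction: passing to the convex sublevel set `{x ∈ X | f x y₀ ≤ c}` yields `y₁` from the
induction hypothesis, so `max (f x y₁) (f x y₀) ≥ c` on `X`. Separating the upward closure of
the values of these two convex functions, which is convex, from the open quadrant below
`(c, c)` gives weights `t, 1 - t` with `t f x y₁ + (1 - t) f x y₀ ≥ c`, and concavity in `y`
turns this into the single point `t y₁ + (1 - t) y₀`. This contradicts the choice of `c`.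
-/

open Set

lemma nonpos_of_forall_mul_le {a K : ℝ} (h : ∀ r : ℝ, 0 ≤ r → r * a ≤ K) : a ≤ 0 := by
  by_contra! ha
  have := h ((|K| + 1) / a) (by positivity)
  rw [div_mul_cancel₀ _ ha.ne'] at this
  linarith [le_abs_self K]

lemma ContinuousLinearMap.apply_prod_eq (L : ℝ × ℝ →L[ℝ] ℝ) (p : ℝ × ℝ) :
    L p = p.1 * L (1, 0) + p.2 * L (0, 1) := by
  have hp : p = p.1 • ((1 : ℝ), (0 : ℝ)) + p.2 • ((0 : ℝ), (1 : ℝ)) := by ext <;> simp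
  conv_lhs => rw [hp]
  rw [map_add, map_smul, map_smul, smul_eq_mul, smul_eq_mul]

lemma exists_mem_Icc_le_convexCombination {C : Set (ℝ × ℝ)} (hC : Convex ℝ C)
    (hCne : C.Nonempty) {c : ℝ} (hCc : ∀ p ∈ C, c ≤ max p.1 p.2) :
    ∃ t ∈ Icc (0 : ℝ) 1, ∀ p ∈ C, c ≤ t * p.1 + (1 - t) * p.2 := by
  have hdisj : Disjoint (Iio c ×ˢ Iio c) C := by
    refine Set.disjoint_left.2 fun p ⟨hp₁, hp₂⟩ hpC => ?_
    exact (hCc p hpC).not_gt (max_lt hp₁ hp₂)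
  obtain ⟨L, u, hQ, hC⟩ := geometric_hahn_banach_open ((convex_Iio c).prod (convex_Iio c))
    (isOpen_Iio.prod isOpen_Iio) hC hdisj
  have hL := L.apply_prod_eq
  set a := L (1, 0)
  set b := L (0, 1)
  have hQ' : ∀ s₁ < c, ∀ s₂ < c, s₁ * a + s₂ * b < u := fun s₁ h₁ s₂ h₂ =>
    hL (s₁, s₂) ▸ hQ (s₁, s₂) ⟨h₁, h₂⟩
  have hC' : ∀ p ∈ C, u ≤ p.1 * a + p.2 * b := fun p hp => hL p ▸ hC p hp
  have ha : 0 ≤ a := by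
    refine neg_nonpos.1 (nonpos_of_forall_mul_le (K := u - (c - 1) * (a + b)) fun r hr => ?_)
    have := hQ' (c - 1 - r) (by linarith) (c - 1) (by linarith)
    linarith
  have hb : 0 ≤ b := by
    refine neg_nonpos.1 (nonpos_of_forall_mul_le (K := u - (c - 1) * (a + b)) fun r hr => ?_)
    have := hQ' (c - 1) (by linarith) (c - 1 - r) (by linarith)
    linarith
  obtain ⟨p₀, hp₀⟩ := hCne
  have hab : 0 < a + b := by
    by_contra! hab
    have hQ₀ := hQ' (c - 1) (by linarith) (c - 1) (by linarith)
    have hC₀ := hC' p₀ hp₀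
    rw [show a = 0 by linarith, show b = 0 by linarith] at hQ₀ hC₀
    linarith
  have hcu : c * (a + b) ≤ u := by
    rw [← le_div_iff₀ hab]
    refine le_of_forall_lt fun s hs => (lt_div_iff₀ hab).2 ?_
    linarith [hQ' s hs s hs]
  refine ⟨a / (a + b), ⟨by positivity, (div_le_one hab).2 (by linarith)⟩, fun p hp => ?_⟩
  have : a / (a + b) * p.1 + (1 - a / (a + b)) * p.2 = (p.1 * a + p.2 * b) / (a + b) := by
    field_simp
    ring
  rw [this, le_div_iff₀ hab]
  linarith [hC' p hp]

section

variable {E F : Type*}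

lemma IsCompact.exists_finset_subset_forall_exists_lt [TopologicalSpace E] {X : Set E}
    (hXc : IsCompact X) {Y : Set F} {f : E → F → ℝ}
    (hlsc : ∀ y ∈ Y, LowerSemicontinuousOn (fun x => f x y) X) {c : ℝ}
    (h : ∀ x ∈ X, ∃ y ∈ Y, c < f x y) :
    ∃ s : Finset F, ↑s ⊆ Y ∧ ∀ x ∈ X, ∃ y ∈ s, c < f x y := by
  choose! U hUopen hU using fun y hy => lowerSemicontinuousOn_iff_preimage_Ioi.1 (hlsc y hy) c
  obtain ⟨t, htY, htfin, hXt⟩ := hXc.elim_finite_subcover_image hUopen fun x hx => by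
    obtain ⟨y, hy, hxy⟩ := h x hx
    have : x ∈ X ∩ U y := hU y hy ▸ ⟨hx, hxy⟩
    exact mem_biUnion hy this.2
  refine ⟨htfin.toFinset, by simpa using htY, fun x hx => ?_⟩
  obtain ⟨y, hyt, hxy⟩ := mem_iUnion₂.1 (hXt hx)
  have : x ∈ X ∩ (fun x => f x y) ⁻¹' Ioi c := (hU y (htY hyt)).symm ▸ ⟨hx, hxy⟩
  exact ⟨y, htfin.mem_toFinset.2 hyt, this.2⟩

variable [AddCommGroup E] [Module ℝ E] [AddCommGroup F] [Module ℝ F]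

lemma ConvexOn.exists_mem_Icc_le_convexCombination_of_le_max {X : Set E} (hXne : X.Nonempty)
    {g h : E → ℝ} (hg : ConvexOn ℝ X g) (hh : ConvexOn ℝ X h) {c : ℝ}
    (hc : ∀ x ∈ X, c ≤ max (g x) (h x)) :
    ∃ t ∈ Icc (0 : ℝ) 1, ∀ x ∈ X, c ≤ t * g x + (1 - t) * h x := by
  let C : Set (ℝ × ℝ) := {p | ∃ x ∈ X, g x ≤ p.1 ∧ h x ≤ p.2}
  have hC : Convex ℝ C := by
    rintro p ⟨x₁, hx₁, hg₁, hh₁⟩ q ⟨x₂, hx₂, hg₂, hh₂⟩ a b ha hb hab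
    refine ⟨a • x₁ + b • x₂, hg.1 hx₁ hx₂ ha hb hab, ?_, ?_⟩
    · calc g (a • x₁ + b • x₂) ≤ a • g x₁ + b • g x₂ := hg.2 hx₁ hx₂ ha hb hab
        _ ≤ (a • p + b • q).1 := by simp only [smul_eq_mul, Prod.fst_add, Prod.smul_fst]; gcongr
    · calc h (a • x₁ + b • x₂) ≤ a • h x₁ + b • h x₂ := hh.2 hx₁ hx₂ ha hb hab
        _ ≤ (a • p + b • q).2 := by simp only [smul_eq_mul, Prod.snd_add, Prod.smul_snd]; gcongr
  obtain ⟨x₀, hx₀⟩ := hXne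
  obtain ⟨t, ht, htC⟩ := exists_mem_Icc_le_convexCombination hC
    ⟨(g x₀, h x₀), x₀, hx₀, le_rfl, le_rfl⟩
    fun p ⟨x, hx, hgx, hhx⟩ => (hc x hx).trans (max_le_max hgx hhx)
  exact ⟨t, ht, fun x hx => htC (g x, h x) ⟨x, hx, le_rfl, le_rfl⟩⟩

lemma exists_forall_le_of_forall_exists_mem_finset_lt {X : Set E} (hXne : X.Nonempty)
    {Y : Set F} (hYconv : Convex ℝ Y) {f : E → F → ℝ}
    (hconv : ∀ y ∈ Y, ConvexOn ℝ X (fun x => f x y)) (hconc : ∀ x ∈ X, ConcaveOn ℝ Y (f x))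
    {c : ℝ} {s : Finset F} (hsY : ↑s ⊆ Y) (hcover : ∀ x ∈ X, ∃ y ∈ s, c < f x y) :
    ∃ y ∈ Y, ∀ x ∈ X, c ≤ f x y := by
  classical
  induction s using Finset.induction_on generalizing X with
  | empty =>
    obtain ⟨x, hx⟩ := hXne
    simpa using hcover x hx
  | @insert y₀ s _ ih =>
    have hy₀ : y₀ ∈ Y := hsY (Finset.mem_insert_self y₀ s)
    let X₀ := {x ∈ X | f x y₀ ≤ c}
    rcases X₀.eq_empty_or_nonempty with hX₀ | hX₀ne
    · refine ⟨y₀, hy₀, fun x hx => le_of_lt (not_le.1 fun hle => ?_)⟩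
      exact hX₀.subset ⟨hx, hle⟩
    have hX₀X : X₀ ⊆ X := sep_subset X _
    obtain ⟨y₁, hy₁, hy₁c⟩ := ih hX₀ne
      (fun y hy => hconv y hy |>.subset hX₀X ((hconv y₀ hy₀).convex_le c))
      (fun x hx => hconc x (hX₀X hx))
      ((Finset.coe_subset.2 (Finset.subset_insert y₀ s)).trans hsY)
      fun x ⟨hx, hxc⟩ => by
        obtain ⟨y, hy, hcy⟩ := hcover x hx
        rcases Finset.mem_insert.1 hy with rfl | hys
        · exact absurd hxc (not_le.2 hcy)
        · exact ⟨y, hys, hcy⟩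
    have hmax : ∀ x ∈ X, c ≤ max (f x y₁) (f x y₀) := fun x hx => by
      by_cases hxc : f x y₀ ≤ c
      · exact le_max_of_le_left (hy₁c x ⟨hx, hxc⟩)
      · exact le_max_of_le_right (not_le.1 hxc).le
    obtain ⟨t, ⟨ht₀, ht₁⟩, ht⟩ := (hconv y₁ hy₁).exists_mem_Icc_le_convexCombination_of_le_max
      hXne (hconv y₀ hy₀) hmax
    refine ⟨t • y₁ + (1 - t) • y₀, hYconv hy₁ hy₀ ht₀ (by linarith) (by ring), fun x hx => ?_⟩
    calc c ≤ t • f x y₁ + (1 - t) • f x y₀ := ht x hx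
      _ ≤ f x (t • y₁ + (1 - t) • y₀) :=
        (hconc x hx).2 hy₁ hy₀ ht₀ (by linarith) (by ring)

end

theorem stmt18_general {E F : Type*}
    [AddCommGroup E] [Module ℝ E] [TopologicalSpace E]
    [AddCommGroup F] [Module ℝ F]
    (X : Set E) (hXc : IsCompact X) (hXne : X.Nonempty)
    (Y : Set F) (hYconv : Convex ℝ Y)
    (f : E → F → ℝ)
    (hlsc : ∀ y ∈ Y, LowerSemicontinuousOn (fun x => f x y) X)
    (hconv : ∀ y ∈ Y, ConvexOn ℝ X (fun x => f x y))
    (hconc : ∀ x ∈ X, ConcaveOn ℝ Y (f x)) :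
    (⨅ x : X, ⨆ y : Y, ((f x y : ℝ) : EReal)) = ⨆ y : Y, ⨅ x : X, ((f x y : ℝ) : EReal) := by
  refine le_antisymm (le_of_not_gt fun hlt => ?_) (iSup_iInf_le_iInf_iSup _)
  obtain ⟨c, hc_sup, hc_inf⟩ := EReal.exists_between_coe_real hlt
  have hcover : ∀ x ∈ X, ∃ y ∈ Y, c < f x y := fun x hx => by
    obtain ⟨⟨y, hy⟩, hcy⟩ := lt_iSup_iff.1 (hc_inf.trans_le (iInf_le _ ⟨x, hx⟩))
    exact ⟨y, hy, EReal.coe_lt_coe_iff.1 hcy⟩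
  obtain ⟨s, hsY, hs⟩ := hXc.exists_finset_subset_forall_exists_lt hlsc hcover
  obtain ⟨y, hy, hyc⟩ := exists_forall_le_of_forall_exists_mem_finset_lt hXne hYconv hconv
    hconc hsY hs
  refine hc_sup.not_ge (le_iSup_of_le ⟨y, hy⟩ (le_iInf fun x => ?_))
  exact EReal.coe_le_coe_iff.2 (hyc x x.2)

/-- Fan's minimax theorem: for `X` a nonempty compact convex subset of a Hausdorff topological
vector space, `Y` a nonempty convex subset of a vector space, and `f : X × Y → ℝ` lower
semi-continuous and convex in `x` and concave in `y`,
`min_{x∈X} sup_{y∈Y} f(x,y) = sup_{y∈Y} min_{x∈X} f(x,y)`. -/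
theorem stmt18 {E F : Type*}
    [AddCommGroup E] [Module ℝ E] [TopologicalSpace E] [T2Space E]
    [AddCommGroup F] [Module ℝ F]
    (X : Set E) (hXc : IsCompact X) (hXconv : Convex ℝ X) (hXne : X.Nonempty)
    (Y : Set F) (hYconv : Convex ℝ Y) (hYne : Y.Nonempty)
    (f : E → F → ℝ)
    (hlsc : ∀ y ∈ Y, LowerSemicontinuousOn (fun x => f x y) X)
    (hconv : ∀ y ∈ Y, ConvexOn ℝ X (fun x => f x y))
    (hconc : ∀ x ∈ X, ConcaveOn ℝ Y (f x)) :
    (⨅ x : X, ⨆ y : Y, ((f x y : ℝ) : EReal)) = ⨆ y : Y, ⨅ x : X, ((f x y : ℝ) : EReal) :=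
  stmt18_general X hXc hXne Y hYconv f hlsc hconv hconc
end
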